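/- The reduction ↪ (one cleaning-rule step followed by all possible simplification steps) is strongly normalizing on the elements of N_{x,f} without free μ-variables: every ↪-reduction sequence starting from such a term is finite. -/

import Mathlib

namespace LambdaMu

/-! ### The λμ-calculus -/

/-- λμ-terms: `mu a b t` denotes μa[b]t (binder a, name b). -/
inductive Tm : Type
  | var : ℕ → Tm
  | lam : ℕ → Tm → Tm
  | app : Tm → Tm → Tm
  | mu  : ℕ → ℕ → Tm → Tm

namespace Tm

/-- size of a term -/
def size : Tm → ℕ
  | var _ => 1
  | lam _ u => u.size + 1
  | app u v => u.size + v.size + 1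
  | mu _ _ u => u.size + 1

/-- ordinary substitution u[v/x] -/
def subst : Tm → ℕ → Tm → Tm
  | var y, x, v => if y = x then v else var y
  | lam y u, x, v => if y = x then lam y u else lam y (subst u x v)
  | app u w, x, v => app (subst u x v) (subst w x v)
  | mu a b u, x, v => mu a b (subst u x v)

/-- μ-substitution u[v/*a] : every named subterm [a]w becomes [a](w)v -/
def msubst : Tm → ℕ → Tm → Tm
  | var y, _, _ => var y
  | lam y u, a, v => lam y (msubst u a v)
  | app u w, a, v => app (msubst u a v) (msubst w a v)
  | mu c b u, a, v =>
      if b = a then mu c b (app (msubst u a v) v) else mu c b (msubst u a v)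

/-- cleaning substitution u[v/**a] : every named subterm [a]w becomes [a](v)w -/
def csubst : Tm → ℕ → Tm → Tm
  | var y, _, _ => var y
  | lam y u, a, v => lam y (csubst u a v)
  | app u w, a, v => app (csubst u a v) (csubst w a v)
  | mu c b u, a, v =>
      if b = a then mu c b (app v (csubst u a v)) else mu c b (csubst u a v)

/-- renaming of μ-variables u[a/b] : every name [b] becomes [a] -/
def mrename : Tm → ℕ → ℕ → Tm
  | var y, _, _ => var y
  | lam y u, a, b => lam y (mrename u a b)
  | app u w, a, b => app (mrename u a b) (mrename w a b)
  | mu c d u, a, b => mu c (if d = b then a else d) (mrename u a b)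

/-- free λ-variables -/
def freeVar : Tm → Set ℕ
  | var y => {y}
  | lam y u => freeVar u \ {y}
  | app u w => freeVar u ∪ freeVar w
  | mu _ _ u => freeVar u

/-- free μ-variables -/
def freeMu : Tm → Set ℕ
  | var _ => ∅
  | lam _ u => freeMu u
  | app u w => freeMu u ∪ freeMu w
  | mu a b u => (insert b (freeMu u)) \ {a}

/-- closed terms -/
def Closed (t : Tm) : Prop := freeVar t = ∅ ∧ freeMu t = ∅

/-- pure λ-terms (no μ-construct) -/
def Pure : Tm → Prop
  | var _ => True
  | lam _ u => Pure u
  | app u w => Pure u ∧ Pure w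
  | mu _ _ _ => False

def isLam : Tm → Prop
  | lam _ _ => True
  | _ => False

def isMu : Tm → Prop
  | mu _ _ _ => True
  | _ => False

/-- the term u contains a named subterm [a]λy w -/
def hasNamedLamIn : Tm → ℕ → Prop
  | var _, _ => False
  | lam _ u, a => hasNamedLamIn u a
  | app u w, a => hasNamedLamIn u a ∨ hasNamedLamIn w a
  | mu _ b u, a => (b = a ∧ isLam u) ∨ hasNamedLamIn u a

/-- the named term [b]u contains a subterm of the form [a]λy w -/
def hasNamedLam (a b : ℕ) (u : Tm) : Prop := (b = a ∧ isLam u) ∨ hasNamedLamIn u a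

/-- result of the μ computation rule: (μa[b]u)v → μa (([b]u)[v/*a]) -/
def muApp (a b : ℕ) (u v : Tm) : Tm :=
  if b = a then mu a b (app (msubst u a v) v) else mu a b (msubst u a v)

/-- result of the cleaning rule: (v)(μa[b]u) → μa (([b]u)[v/**a]) -/
def muCoApp (a b : ℕ) (u v : Tm) : Tm :=
  if b = a then mu a b (app v (csubst u a v)) else mu a b (csubst u a v)

end Tm

/-- one-step reduction of the λμ-calculus (rules C1, C2, S1, S2, S3, in any context) -/
inductive Step : Tm → Tm → Prop
  | c1 (x : ℕ) (u v : Tm) : Step (.app (.lam x u) v) (u.subst x v)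
  | c2 (a b : ℕ) (u v : Tm) : Step (.app (.mu a b u) v) (Tm.muApp a b u v)
  | s1 (c a b d : ℕ) (u : Tm) :
      Step (.mu c a (.mu b d u)) (.mu c (if d = b then a else d) (u.mrename a b))
  | s2 (a : ℕ) (u : Tm) : a ∉ u.freeMu → Step (.mu a a u) u
  | s3 (a b : ℕ) (u : Tm) (x : ℕ) : Tm.hasNamedLam a b u → x ∉ u.freeVar →
      Step (.mu a b u) (.lam x (Tm.muApp a b u (.var x)))
  | lamC (x : ℕ) {u v : Tm} : Step u v → Step (.lam x u) (.lam x v)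
  | appL {u v : Tm} (w : Tm) : Step u v → Step (.app u w) (.app v w)
  | appR (w : Tm) {u v : Tm} : Step u v → Step (.app w u) (.app w v)
  | muC (a b : ℕ) {u v : Tm} : Step u v → Step (.mu a b u) (.mu a b v)

/-- the reduction of the λμ-calculus -/
abbrev Red : Tm → Tm → Prop := Relation.ReflTransGen Step

/-- a λμ-term in normal form -/
def Normal (t : Tm) : Prop := ∀ u, ¬ Step t u

/-- one-step β-reduction (rule C1 only, in any context) -/
inductive BetaStep : Tm → Tm → Prop
  | c1 (x : ℕ) (u v : Tm) : BetaStep (.app (.lam x u) v) (u.subst x v)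
  | lamC (x : ℕ) {u v : Tm} : BetaStep u v → BetaStep (.lam x u) (.lam x v)
  | appL {u v : Tm} (w : Tm) : BetaStep u v → BetaStep (.app u w) (.app v w)
  | appR (w : Tm) {u v : Tm} : BetaStep u v → BetaStep (.app w u) (.app w v)
  | muC (a b : ℕ) {u v : Tm} : BetaStep u v → BetaStep (.mu a b u) (.mu a b v)

/-- β-reduction (reflexive-transitive) -/
abbrev BetaRed : Tm → Tm → Prop := Relation.ReflTransGen BetaStep

/-- β-equivalence ≃β -/
abbrev BetaEq : Tm → Tm → Prop := Relation.EqvGen BetaStep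

/-- a λ-term in β-normal form -/
def BetaNormal (t : Tm) : Prop := ∀ u, ¬ BetaStep t u

/-! ### Head reduction -/

/-- the term has a redex in head position -/
def headRedex : Tm → Prop
  | .app u _ => u.isLam ∨ u.isMu
  | .mu a b u => u.isMu ∨ (b = a ∧ a ∉ u.freeMu) ∨ Tm.hasNamedLam a b u
  | _ => False

/-- one step of head reduction (reduction of the leftmost redex of a term
which is not in head normal form) -/
inductive HStep : Tm → Tm → Prop
  | c1 (x : ℕ) (u v : Tm) : HStep (.app (.lam x u) v) (u.subst x v)
  | c2 (a b : ℕ) (u v : Tm) : HStep (.app (.mu a b u) v) (Tm.muApp a b u v)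
  | s1 (c a b d : ℕ) (u : Tm) :
      HStep (.mu c a (.mu b d u)) (.mu c (if d = b then a else d) (u.mrename a b))
  | s2 (a : ℕ) (u : Tm) : a ∉ u.freeMu → HStep (.mu a a u) u
  | s3 (a b : ℕ) (u : Tm) (x : ℕ) : Tm.hasNamedLam a b u → x ∉ u.freeVar →
      HStep (.mu a b u) (.lam x (Tm.muApp a b u (.var x)))
  | lamC (x : ℕ) {u v : Tm} : HStep u v → HStep (.lam x u) (.lam x v)
  | appL {u v : Tm} (w : Tm) : ¬ headRedex (.app u w) → HStep u v →
      HStep (.app u w) (.app v w)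
  | muC (a b : ℕ) {u v : Tm} : ¬ headRedex (.mu a b u) → HStep u v →
      HStep (.mu a b u) (.mu a b v)

/-- `HRed t u n` : t head-reduces to u in n steps, i.e. t ≻ u with h(t, u) = n -/
inductive HRed : Tm → Tm → ℕ → Prop
  | refl (t : Tm) : HRed t t 0
  | step {t u v : Tm} {n : ℕ} : HStep t u → HRed u v n → HRed t v (n + 1)

/-- t ≻ u : u is obtained from t by head reduction -/
def HeadRed (t u : Tm) : Prop := ∃ n, HRed t u n

/-- simultaneous substitution, given for each λ-variable an optional term to
substitute for it, and for each μ-variable an optional term to μ-substitute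
(`*`-substitute) for it -/
def simSubstFn (σ τ : ℕ → Option Tm) : Tm → Tm
  | .var y => (σ y).getD (.var y)
  | .lam y u => .lam y (simSubstFn σ τ u)
  | .app u w => .app (simSubstFn σ τ u) (simSubstFn σ τ w)
  | .mu a b u =>
      match τ b with
      | some v => .mu a b (.app (simSubstFn σ τ u) v)
      | none => .mu a b (simSubstFn σ τ u)

/-- the simultaneous substitution u[p̄/x̄ , q̄/*ᾱ] given by the association
lists ps = (x̄, p̄) and qs = (ᾱ, q̄) -/
def simSubst (t : Tm) (ps qs : List (ℕ × Tm)) : Tm :=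
  simSubstFn (fun y => ps.lookup y) (fun a => qs.lookup a) t

/-- parallel substitution of λ-variables (used for the substitution σ of
storage operators) -/
def lsubst (σ : ℕ → Tm) : Tm → Tm
  | .var y => σ y
  | .lam y u => .lam y (lsubst (Function.update σ y (.var y)) u)
  | .app u w => .app (lsubst σ u) (lsubst σ w)
  | .mu a b u => .mu a b (lsubst σ u)

/-- (f)ⁿt : n-fold application -/
def iterApp (f t : Tm) : ℕ → Tm
  | 0 => t
  | n + 1 => .app f (iterApp f t n)

/-- (t)w₁…w_k -/
def appList (t : Tm) (ws : List Tm) : Tm := ws.foldl .app t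

/-- the Church numeral n̄ = λxλf(f)ⁿx -/
def church (n : ℕ) : Tm := .lam 0 (.lam 1 (iterApp (.var 1) (.var 0) n))

/-- t is (an α-copy of) the Church numeral n̄ = λxλf(f)ⁿx -/
def IsChurch (n : ℕ) (t : Tm) : Prop :=
  ∃ x f, x ≠ f ∧ t = .lam x (.lam f (iterApp (.var f) (.var x) n))

/-! ### The set N_{x,f} and the functions rep and val -/

/-- the set N_{x,f} -/
inductive NSet (x f : ℕ) : Tm → Prop
  | var : NSet x f (.var x)
  | muvar (a b : ℕ) : NSet x f (.mu a b (.var x))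
  | fapp {u : Tm} : NSet x f u → NSet x f (.app (.var f) u)
  | mufapp (a b : ℕ) {u : Tm} : NSet x f u → NSet x f (.mu a b (.app (.var f) u))

/-- subterm relation -/
inductive Sub : Tm → Tm → Prop
  | refl (t : Tm) : Sub t t
  | lam {s u : Tm} (x : ℕ) : Sub s u → Sub s (.lam x u)
  | appL {s u : Tm} (v : Tm) : Sub s u → Sub s (.app u v)
  | appR (u : Tm) {s v : Tm} : Sub s v → Sub s (.app u v)
  | mu (a b : ℕ) {s u : Tm} : Sub s u → Sub s (.mu a b u)

/-- the list of all subterms w such that [a]w is a named subterm of t -/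
def namedSub (a : ℕ) : Tm → List Tm
  | .var _ => []
  | .lam _ u => namedSub a u
  | .app u v => namedSub a u ++ namedSub a v
  | .mu _ b u => (if b = a then [u] else []) ++ namedSub a u

/-- the list of all w such that [a]w is a subterm of the named term [b]u -/
def namedTop (a b : ℕ) (u : Tm) : List Tm :=
  (if b = a then [u] else []) ++ namedSub a u

theorem namedSub_size {a : ℕ} : ∀ {t v : Tm}, v ∈ namedSub a t → v.size < t.size := by
  intro t
  induction t with
  | var y => intro v hv; simp [namedSub] at hv
  | lam y u ih =>
      intro v hv
      simp only [namedSub] at hv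
      have := ih hv; simp only [Tm.size]; omega
  | app u w ihu ihw =>
      intro v hv
      simp only [namedSub, List.mem_append] at hv
      rcases hv with h | h
      · have := ihu h; simp only [Tm.size]; omega
      · have := ihw h; simp only [Tm.size]; omega
  | mu c b u ih =>
      intro v hv
      simp only [namedSub, List.mem_append] at hv
      rcases hv with h | h
      · have : v = u := by
          by_cases hba : b = a <;> simp [hba] at h
          exact h
        subst this; simp only [Tm.size]; omega
      · have := ih h; simp only [Tm.size]; omega

theorem namedTop_size {a b : ℕ} {u v : Tm} (h : v ∈ namedTop a b u) : v.size ≤ u.size := by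
  simp only [namedTop, List.mem_append] at h
  rcases h with h | h
  · by_cases hba : b = a <;> simp [hba] at h
    subst h; exact le_rfl
  · exact le_of_lt (namedSub_size h)

/-- the set of possible values of a λμ-term of N_{x,f} :
val(x) = {0}, val((f)u) = {n+1 : n ∈ val(u)},
val(μa[b]u) = union of the val(v) for [a]v a subterm of [b]u -/
def val : Tm → Set ℕ
  | .var _ => {0}
  | .lam _ _ => ∅
  | .app _ u => (· + 1) '' val u
  | .mu a b u =>
      ((namedTop a b u).attach.map (fun ⟨v, _⟩ => val v)).foldr (· ∪ ·) ∅
termination_by t => t.size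
decreasing_by
  · simp only [Tm.size]; omega
  · have := namedTop_size (by assumption)
    simp only [Tm.size]; omega

/-- the set of integers represented by a λμ-term of N_{x,f} :
rep(x) = {0}, rep((f)u) = {n+1 : n ∈ rep(u)},
rep(μa[b]u) = intersection of the rep(v) for [a]v a subterm of [b]u -/
def rep : Tm → Set ℕ
  | .var _ => {0}
  | .lam _ _ => ∅
  | .app _ u => (· + 1) '' rep u
  | .mu a b u =>
      ((namedTop a b u).attach.map (fun ⟨v, _⟩ => rep v)).foldr (· ∩ ·) Set.univ
termination_by t => t.size
decreasing_by
  · simp only [Tm.size]; omega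
  · have := namedTop_size (by assumption)
    simp only [Tm.size]; omega

/-! ### The cleaning rule and the reduction ↪ -/

/-- one simplification step (rules S1, S2, S3, in any context) -/
inductive SStep : Tm → Tm → Prop
  | s1 (c a b d : ℕ) (u : Tm) :
      SStep (.mu c a (.mu b d u)) (.mu c (if d = b then a else d) (u.mrename a b))
  | s2 (a : ℕ) (u : Tm) : a ∉ u.freeMu → SStep (.mu a a u) u
  | s3 (a b : ℕ) (u : Tm) (x : ℕ) : Tm.hasNamedLam a b u → x ∉ u.freeVar →
      SStep (.mu a b u) (.lam x (Tm.muApp a b u (.var x)))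
  | lamC (x : ℕ) {u v : Tm} : SStep u v → SStep (.lam x u) (.lam x v)
  | appL {u v : Tm} (w : Tm) : SStep u v → SStep (.app u w) (.app v w)
  | appR (w : Tm) {u v : Tm} : SStep u v → SStep (.app w u) (.app w v)
  | muC (a b : ℕ) {u v : Tm} : SStep u v → SStep (.mu a b u) (.mu a b v)

/-- one cleaning step (rule (N) : (u)μa v → μa v[u/**a], in any context) -/
inductive CStep : Tm → Tm → Prop
  | clean (a b : ℕ) (u v : Tm) : CStep (.app v (.mu a b u)) (Tm.muCoApp a b u v)
  | lamC (x : ℕ) {u v : Tm} : CStep u v → CStep (.lam x u) (.lam x v)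
  | appL {u v : Tm} (w : Tm) : CStep u v → CStep (.app u w) (.app v w)
  | appR (w : Tm) {u v : Tm} : CStep u v → CStep (.app w u) (.app w v)
  | muC (a b : ℕ) {u v : Tm} : CStep u v → CStep (.mu a b u) (.mu a b v)

/-- u ↪ v : v is obtained from u by one application of the cleaning rule
followed by all possible simplifications -/
def Hook (u v : Tm) : Prop :=
  ∃ w, CStep u w ∧ Relation.ReflTransGen SStep w v ∧ ∀ z, ¬ SStep v z

/-- the number m of μ's in the canonical writing
u = (f)^{j_{m+1}} μβ_m[γ_m] (f)^{j_m} … μβ₁[γ₁] (f)^{j₁} x of an element of N_{x,f} -/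
def lcount : Tm → ℕ
  | .app _ u => lcount u
  | .mu _ _ u => lcount u + 1
  | _ => 0

def LlistAux : Tm → ℕ → List ℕ
  | .app _ u, k => LlistAux u (k + 1)
  | .mu _ _ u, k => k :: LlistAux u 0
  | _, k => [k]

/-- the list L(u) = (j_{m+1}, …, j₁) of an element of N_{x,f} -/
def Llist (t : Tm) : List ℕ := LlistAux t 0

/-- C(u) > C(v) in the lexicographic order on C(u) = (l(u), L(u)) -/
def Cgt (u v : Tm) : Prop :=
  lcount v < lcount u ∨ (lcount u = lcount v ∧ List.Lex (· < ·) (Llist v) (Llist u))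

/-! ### Second-order types -/

/-- first-order terms of a second-order language (function symbol k of arity n) -/
inductive FOTerm : Type
  | var : ℕ → FOTerm
  | func : ℕ → (n : ℕ) → (Fin n → FOTerm) → FOTerm

namespace FOTerm

/-- the constant 0 -/
def zero : FOTerm := .func 0 0 Fin.elim0
/-- the successor symbol s -/
def succ (t : FOTerm) : FOTerm := .func 1 1 (fun _ => t)

/-- sⁿ(0) -/
def numeral : ℕ → FOTerm
  | 0 => zero
  | n + 1 => succ (numeral n)

/-- simultaneous first-order substitution -/
def substT (σ : ℕ → FOTerm) : FOTerm → FOTerm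
  | var y => σ y
  | func k n f => func k n (fun i => substT σ (f i))

/-- free first-order variables -/
def fvar : FOTerm → Set ℕ
  | var y => {y}
  | func _ _ f => ⋃ i, fvar (f i)

end FOTerm

/-- formulas of the second-order predicate calculus over ⊥, →, ∀;
`rel X n args` is the atomic formula X(args) where X is a second-order variable
of arity n; `fall x A` is first-order quantification; `Fall X n A` quantifies
the second-order variable X of arity n -/
inductive Formula : Type
  | bot : Formula
  | rel : ℕ → (n : ℕ) → (Fin n → FOTerm) → Formula
  | arr : Formula → Formula → Formula
  | fall : ℕ → Formula → Formula
  | Fall : ℕ → ℕ → Formula → Formula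

namespace Formula

/-- first-order substitution in formulas -/
def substFO (σ : ℕ → FOTerm) : Formula → Formula
  | bot => bot
  | rel X n f => rel X n (fun i => (f i).substT σ)
  | arr A B => arr (substFO σ A) (substFO σ B)
  | fall x A => fall x (substFO (Function.update σ x (.var x)) A)
  | Fall X n A => Fall X n (substFO σ A)

/-- the substitution [u/x] -/
def subst1 (x : ℕ) (u : FOTerm) : ℕ → FOTerm := fun y => if y = x then u else .var y

/-- interpreting the tuple of distinguished variables ys as the arguments args -/
def argMap (n : ℕ) (ys : Fin n → ℕ) (args : Fin n → FOTerm) : ℕ → FOTerm :=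
  fun y =>
    match (List.finRange n).find? (fun i => ys i = y) with
    | some i => args i
    | none => .var y

/-- second-order substitution A[G/X], where the predicate substituted for the
arity-n variable X is given by the formula G together with distinguished
first-order variables ys -/
def substRel (X n : ℕ) (G : Formula) (ys : Fin n → ℕ) : Formula → Formula
  | bot => bot
  | rel Y m f =>
      if h : Y = X ∧ m = n then G.substFO (argMap n ys (fun i => f (Fin.cast h.2.symm i)))
      else rel Y m f
  | arr A B => arr (substRel X n G ys A) (substRel X n G ys B)
  | fall x A => fall x (substRel X n G ys A)
  | Fall Y m A => if Y = X ∧ m = n then Fall Y m A else Fall Y m (substRel X n G ys A)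

/-- free first-order variables of a formula -/
def fvFO : Formula → Set ℕ
  | bot => ∅
  | rel _ _ f => ⋃ i, (f i).fvar
  | arr A B => fvFO A ∪ fvFO B
  | fall x A => fvFO A \ {x}
  | Fall _ _ A => fvFO A

/-- free second-order variables (with their arities) of a formula -/
def fvRel : Formula → Set (ℕ × ℕ)
  | bot => ∅
  | rel X n _ => {(X, n)}
  | arr A B => fvRel A ∪ fvRel B
  | fall _ A => fvRel A
  | Fall X n A => fvRel A \ {(X, n)}

/-- ¬A := A → ⊥ -/
def neg (A : Formula) : Formula := arr A bot

end Formula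

/-- derivability of the equation u = v from the set of equations E -/
inductive EqDer (E : Set (FOTerm × FOTerm)) : FOTerm → FOTerm → Prop
  | ax {u v : FOTerm} (σ : ℕ → FOTerm) :
      (u, v) ∈ E → EqDer E (u.substT σ) (v.substT σ)
  | refl (u : FOTerm) : EqDer E u u
  | symm {u v : FOTerm} : EqDer E u v → EqDer E v u
  | trans {u v w : FOTerm} : EqDer E u v → EqDer E v w → EqDer E u w
  | congr (k n : ℕ) (f g : Fin n → FOTerm) :
      (∀ i, EqDer E (f i) (g i)) → EqDer E (.func k n f) (.func k n g)

/-- E is adequate for the type of integers -/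
def Adequate (E : Set (FOTerm × FOTerm)) : Prop :=
  (∀ a : FOTerm, ¬ EqDer E (FOTerm.succ a) FOTerm.zero) ∧
    ∀ a b : FOTerm, EqDer E (FOTerm.succ a) (FOTerm.succ b) → EqDer E a b

/-! ### The typing systems -/

/-- typing contexts (sets of labelled formulas) -/
abbrev Ctx := Set (ℕ × Formula)

/-- x does not occur free (as a first-order variable) in the context -/
def freshFO (x : ℕ) (Γ : Ctx) : Prop := ∀ p ∈ Γ, x ∉ p.2.fvFO

/-- (X, n) does not occur free (as a second-order variable) in the context -/
def freshRel (X n : ℕ) (Γ : Ctx) : Prop := ∀ p ∈ Γ, (X, n) ∉ p.2.fvRel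

/-- the classical second-order typing (natural deduction with several
conclusions) for the λμ-calculus: `TypJ E Γ t A Δ` formalizes Γ ⊢ t : A, Δ
(modulo the set of equations E) -/
inductive TypJ (E : Set (FOTerm × FOTerm)) : Ctx → Tm → Formula → Ctx → Prop
  | ax {Γ Δ : Ctx} {x : ℕ} {A : Formula} : (x, A) ∈ Γ → TypJ E Γ (.var x) A Δ
  | abs {Γ Δ : Ctx} {x : ℕ} {A B : Formula} {t : Tm} :
      TypJ E (insert (x, A) Γ) t B Δ → TypJ E Γ (.lam x t) (.arr A B) Δ
  | app {Γ Δ : Ctx} {A B : Formula} {u v : Tm} :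
      TypJ E Γ u (.arr A B) Δ → TypJ E Γ v A Δ → TypJ E Γ (.app u v) B Δ
  | fallI {Γ Δ : Ctx} {t : Tm} {A : Formula} {x : ℕ} :
      TypJ E Γ t A Δ → freshFO x Γ → freshFO x Δ → TypJ E Γ t (.fall x A) Δ
  | fallE {Γ Δ : Ctx} {t : Tm} {A : Formula} {x : ℕ} (u : FOTerm) :
      TypJ E Γ t (.fall x A) Δ → TypJ E Γ t (A.substFO (Formula.subst1 x u)) Δ
  | FallI {Γ Δ : Ctx} {t : Tm} {A : Formula} {X n : ℕ} :
      TypJ E Γ t A Δ → freshRel X n Γ → freshRel X n Δ → TypJ E Γ t (.Fall X n A) Δ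
  | FallE {Γ Δ : Ctx} {t : Tm} {A : Formula} {X n : ℕ} (G : Formula) (ys : Fin n → ℕ) :
      TypJ E Γ t (.Fall X n A) Δ → TypJ E Γ t (Formula.substRel X n G ys A) Δ
  | eq {Γ Δ : Ctx} {t : Tm} {A : Formula} {x : ℕ} {u v : FOTerm} :
      TypJ E Γ t (A.substFO (Formula.subst1 x u)) Δ → EqDer E u v →
      TypJ E Γ t (A.substFO (Formula.subst1 x v)) Δ
  | muNe {Γ Δ : Ctx} {t : Tm} {A B : Formula} {a b : ℕ} :
      TypJ E Γ t A (insert (b, B) Δ) → a ≠ b →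
      TypJ E Γ (.mu b a t) B (insert (a, A) Δ)
  | muEq {Γ Δ : Ctx} {t : Tm} {A : Formula} {a : ℕ} :
      TypJ E Γ t A (insert (a, A) Δ) → TypJ E Γ (.mu a a t) A Δ

/-- the intuitionistic second-order typing system AF2 of Krivine (the previous
system without rule (9)): `AF2 E Γ t A` formalizes Γ ⊢_{AF2} t : A -/
inductive AF2 (E : Set (FOTerm × FOTerm)) : Ctx → Tm → Formula → Prop
  | ax {Γ : Ctx} {x : ℕ} {A : Formula} : (x, A) ∈ Γ → AF2 E Γ (.var x) A
  | abs {Γ : Ctx} {x : ℕ} {A B : Formula} {t : Tm} :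
      AF2 E (insert (x, A) Γ) t B → AF2 E Γ (.lam x t) (.arr A B)
  | app {Γ : Ctx} {A B : Formula} {u v : Tm} :
      AF2 E Γ u (.arr A B) → AF2 E Γ v A → AF2 E Γ (.app u v) B
  | fallI {Γ : Ctx} {t : Tm} {A : Formula} {x : ℕ} :
      AF2 E Γ t A → freshFO x Γ → AF2 E Γ t (.fall x A)
  | fallE {Γ : Ctx} {t : Tm} {A : Formula} {x : ℕ} (u : FOTerm) :
      AF2 E Γ t (.fall x A) → AF2 E Γ t (A.substFO (Formula.subst1 x u))
  | FallI {Γ : Ctx} {t : Tm} {A : Formula} {X n : ℕ} :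
      AF2 E Γ t A → freshRel X n Γ → AF2 E Γ t (.Fall X n A)
  | FallE {Γ : Ctx} {t : Tm} {A : Formula} {X n : ℕ} (G : Formula) (ys : Fin n → ℕ) :
      AF2 E Γ t (.Fall X n A) → AF2 E Γ t (Formula.substRel X n G ys A)
  | eq {Γ : Ctx} {t : Tm} {A : Formula} {x : ℕ} {u v : FOTerm} :
      AF2 E Γ t (A.substFO (Formula.subst1 x u)) → EqDer E u v →
      AF2 E Γ t (A.substFO (Formula.subst1 x v))

/-! ### The types of the integers -/

/-- the atomic formula X(t) (X the unary second-order variable number 0) -/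
def Xap (t : FOTerm) : Formula := .rel 0 1 (fun _ => t)

/-- N[t] = ∀X{X(0), ∀y(X(y) → X(sy)) → X(t)} (the bound first-order variable y
is the variable number 0) -/
def Nfm (t : FOTerm) : Formula :=
  .Fall 0 1 (.arr (Xap .zero)
    (.arr (.fall 0 (.arr (Xap (.var 0)) (Xap (.succ (.var 0))))) (Xap t)))

/-- N*[t] = ∀X{¬X(0), ∀y(¬X(y) → ¬X(sy)) → ¬X(t)} -/
def Nstar (t : FOTerm) : Formula :=
  .Fall 0 1 (.arr (Formula.neg (Xap .zero))
    (.arr (.fall 0 (.arr (Formula.neg (Xap (.var 0))) (Formula.neg (Xap (.succ (.var 0))))))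
      (Formula.neg (Xap t))))

/-- the propositional trace N = ∀X{X, X → X → X} -/
def Xprop : Formula := .rel 0 0 Fin.elim0
def Nprop : Formula := .Fall 0 0 (.arr Xprop (.arr (.arr Xprop Xprop) Xprop))

/-- a classical integer of value n (modulo the equations E) : a closed λμ-term
of type N[sⁿ(0)] -/
def ClassicalInt (E : Set (FOTerm × FOTerm)) (t : Tm) (n : ℕ) : Prop :=
  t.Closed ∧ TypJ E ∅ t (Nfm (FOTerm.numeral n)) ∅

/-! ### Storage operators -/

/-- 0̄ -/
def churchZero : Tm := church 0
/-- s̄ = λnλxλf(f)((n)x)f -/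
def churchSucc : Tm :=
  .lam 0 (.lam 1 (.lam 2 (.app (.var 2) (.app (.app (.var 0) (.var 1)) (.var 2)))))
/-- (s̄)ⁿ0̄ -/
def sIter : ℕ → Tm
  | 0 => churchZero
  | n + 1 => .app churchSucc (sIter n)

/-- G = λxλy(x)λz(y)(s̄)z -/
def Gop : Tm :=
  .lam 0 (.lam 1 (.app (.var 0) (.lam 2 (.app (.var 1) (.app churchSucc (.var 2))))))
/-- δ = λf(f)0̄ -/
def deltaOp : Tm := .lam 0 (.app (.var 0) churchZero)
/-- T₁ = λn((n)δ)G -/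
def T1 : Tm := .lam 0 (.app (.app (.var 0) deltaOp) Gop)
/-- F = λxλy(x)(s̄)y -/
def Fop : Tm := .lam 0 (.lam 1 (.app (.var 0) (.app churchSucc (.var 1))))
/-- T₂ = λnλf(((n)f)F)0̄ -/
def T2 : Tm :=
  .lam 0 (.lam 1 (.app (.app (.app (.var 0) (.var 1)) Fop) churchZero))

/-- T is a storage operator for the integers -/
def StorageOp (T : Tm) : Prop :=
  ∀ n : ℕ, ∃ τ : Tm, BetaEq τ (church n) ∧
    ∀ θ : Tm, BetaEq θ (church n) →
      ∀ f : ℕ, f ∉ θ.freeVar → ∃ σ : ℕ → Tm,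
        HeadRed (.app (.app T θ) (.var f)) (.app (.var f) (lsubst σ τ))

/-! An application `(y)s` on the spine of a term of N_{x,f} costs `2 ^ l(s)`, where `l(s)` counts
the μ's below it. A cleaning step `(y)μa[b]w → μa[b]w[y/**a]` removes an application of cost
`2 ^ (l(w) + 1)` and creates one copy of `(y)` under each μ named `a`; these copies sit at
pairwise distinct depths `≤ l(w)`, so they cost less than `2 ^ (l(w) + 1)` altogether.
Simplifications never create applications and never increase `l`, so each ↪-step strictly
decreases the total cost. -/

inductive Chain : Tm → Prop
  | var (y : ℕ) : Chain (.var y)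
  | app (y : ℕ) {u : Tm} : Chain u → Chain (.app (.var y) u)
  | mu (a b : ℕ) {u : Tm} : Chain u → Chain (.mu a b u)

def weight : Tm → ℕ
  | .app _ u => 2 ^ lcount u + weight u
  | .mu _ _ u => weight u
  | _ => 0

theorem NSet.chain {x f : ℕ} {u : Tm} (h : NSet x f u) : Chain u := by
  induction h with
  | var => exact .var x
  | muvar a b => exact .mu a b (.var x)
  | fapp _ ih => exact .app f ih
  | mufapp a b _ ih => exact .mu a b (.app f ih)

namespace Chain

theorem not_isLam {u : Tm} (h : Chain u) : ¬ u.isLam := by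
  cases h <;> simp [Tm.isLam]

theorem not_hasNamedLamIn {u : Tm} (h : Chain u) (a : ℕ) : ¬ u.hasNamedLamIn a := by
  induction h with
  | var y => simp [Tm.hasNamedLamIn]
  | app y _ ih => simpa [Tm.hasNamedLamIn] using ih
  | mu _ _ hu ih => simpa [Tm.hasNamedLamIn, hu.not_isLam] using ih

theorem not_hasNamedLam {a b : ℕ} {u : Tm} (h : Chain u) : ¬ Tm.hasNamedLam a b u := by
  rintro (⟨-, hl⟩ | hin)
  exacts [h.not_isLam hl, h.not_hasNamedLamIn a hin]

theorem mrename {u : Tm} (h : Chain u) (a b : ℕ) : Chain (u.mrename a b) := by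
  induction h with
  | var y => exact .var y
  | app y _ ih => exact .app y ih
  | mu c d _ ih => exact .mu c _ ih

theorem csubst {u : Tm} (h : Chain u) (a y : ℕ) : Chain (u.csubst a (.var y)) := by
  induction h with
  | var z => exact .var z
  | app z _ ih => exact .app z ih
  | mu c b _ ih =>
      by_cases hba : b = a
      · simpa [Tm.csubst, hba] using Chain.mu c b (.app y ih)
      · simpa [Tm.csubst, hba] using Chain.mu c b ih

end Chain

theorem lcount_mrename (u : Tm) (a b : ℕ) : lcount (u.mrename a b) = lcount u := by
  induction u <;> simp [Tm.mrename, lcount, *]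

theorem weight_mrename (u : Tm) (a b : ℕ) : weight (u.mrename a b) = weight u := by
  induction u <;> simp [Tm.mrename, weight, lcount_mrename, *]

theorem lcount_csubst (u : Tm) (a : ℕ) (v : Tm) : lcount (u.csubst a v) = lcount u := by
  induction u with
  | mu c b u ih => by_cases hba : b = a <;> simp [Tm.csubst, hba, lcount, ih]
  | _ => simp [Tm.csubst, lcount, *]

/-- The copies of `(y)` created by `[y/**a]` inside `u` lie at distinct depths `< l(u)`. -/
theorem Chain.weight_csubst_lt {u : Tm} (h : Chain u) (a y : ℕ) :
    weight (u.csubst a (.var y)) < weight u + 2 ^ lcount u := by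
  induction h with
  | var z => simp [Tm.csubst, weight]
  | app z _ ih =>
      simp only [Tm.csubst, weight, lcount, lcount_csubst]
      omega
  | @mu _ b w _ ih =>
      have hpow : 2 ^ (lcount w + 1) = 2 * 2 ^ lcount w := by ring
      by_cases hba : b = a
      · simp only [Tm.csubst, hba, ↓reduceIte, weight, lcount, lcount_csubst]
        omega
      · simp only [Tm.csubst, hba, ↓reduceIte, weight, lcount]
        omega

theorem Chain.muCoApp {a b y : ℕ} {u : Tm} (h : Chain u) :
    Chain (Tm.muCoApp a b u (.var y)) := by
  by_cases hba : b = a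
  · simpa [Tm.muCoApp, hba] using Chain.mu a b (.app y (h.csubst a y))
  · simpa [Tm.muCoApp, hba] using Chain.mu a b (h.csubst a y)

theorem lcount_muCoApp (a b : ℕ) (u v : Tm) : lcount (Tm.muCoApp a b u v) = lcount u + 1 := by
  by_cases hba : b = a <;> simp [Tm.muCoApp, hba, lcount, lcount_csubst]

theorem Chain.weight_muCoApp_lt {a b y : ℕ} {u : Tm} (h : Chain u) :
    weight (Tm.muCoApp a b u (.var y)) < weight (.app (.var y) (.mu a b u)) := by
  have hcopies := h.weight_csubst_lt a y
  have hpow : 2 ^ (lcount u + 1) = 2 * 2 ^ lcount u := by ring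
  by_cases hba : b = a
  · simp only [Tm.muCoApp, hba, ↓reduceIte, weight, lcount, lcount_csubst]
    omega
  · simp only [Tm.muCoApp, hba, ↓reduceIte, weight, lcount]
    omega

theorem CStep.chain_weight_lt {t t' : Tm} (hs : CStep t t') (hc : Chain t) :
    Chain t' ∧ lcount t' = lcount t ∧ weight t' < weight t := by
  induction hs with
  | clean a b w v =>
      obtain ⟨y, rfl, hw⟩ : ∃ y, v = .var y ∧ Chain w := by
        cases hc with | app y hmu => cases hmu with | mu _ _ hw => exact ⟨y, rfl, hw⟩
      exact ⟨hw.muCoApp, by simp [lcount, lcount_muCoApp], hw.weight_muCoApp_lt⟩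
  | lamC => cases hc
  | appL _ h => cases hc; cases h
  | appR _ _ ih =>
      cases hc with
      | app y hw =>
        obtain ⟨hc', hl, hlt⟩ := ih hw
        exact ⟨.app y hc', by simp [lcount, hl], by simp only [weight, hl]; omega⟩
  | muC a b _ ih =>
      cases hc with
      | mu _ _ hw =>
        obtain ⟨hc', hl, hlt⟩ := ih hw
        exact ⟨.mu a b hc', by simp [lcount, hl], by simpa [weight] using hlt⟩

theorem SStep.chain_weight_le {t t' : Tm} (hs : SStep t t') (hc : Chain t) :
    Chain t' ∧ lcount t' ≤ lcount t ∧ weight t' ≤ weight t := by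
  induction hs with
  | s1 c a b =>
      cases hc with
      | mu _ _ hmu =>
        cases hmu with
        | mu _ _ hw =>
          exact ⟨.mu c _ (hw.mrename a b), by simp [lcount, lcount_mrename],
            by simp [weight, weight_mrename]⟩
  | s2 => cases hc with | mu _ _ hw => exact ⟨hw, by simp [lcount], by simp [weight]⟩
  | s3 => cases hc with | mu _ _ hw => exact absurd ‹_› hw.not_hasNamedLam
  | lamC => cases hc
  | appL _ h => cases hc; cases h
  | appR _ _ ih =>
      cases hc with
      | app y hw =>
        obtain ⟨hc', hl, hle⟩ := ih hw
        have hpow := Nat.pow_le_pow_right two_pos hl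
        exact ⟨.app y hc', by simpa [lcount] using hl, by simp only [weight]; omega⟩
  | muC a b _ ih =>
      cases hc with
      | mu _ _ hw =>
        obtain ⟨hc', hl, hle⟩ := ih hw
        exact ⟨.mu a b hc', by simpa [lcount] using hl, by simpa [weight] using hle⟩

theorem SStep.reflTransGen_chain_weight_le {t t' : Tm} (hs : Relation.ReflTransGen SStep t t')
    (hc : Chain t) : Chain t' ∧ weight t' ≤ weight t := by
  induction hs with
  | refl => exact ⟨hc, le_rfl⟩
  | tail _ hstep ih =>
      obtain ⟨hc', hle⟩ := ih
      obtain ⟨hc'', -, hle'⟩ := hstep.chain_weight_le hc'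
      exact ⟨hc'', hle'.trans hle⟩

theorem Hook.chain_weight_lt {t t' : Tm} (hh : Hook t t') (hc : Chain t) :
    Chain t' ∧ weight t' < weight t := by
  obtain ⟨w, hclean, hsimp, -⟩ := hh
  obtain ⟨hcw, -, hlt⟩ := hclean.chain_weight_lt hc
  obtain ⟨hct', hle⟩ := SStep.reflTransGen_chain_weight_le hsimp hcw
  exact ⟨hct', hle.trans_lt hlt⟩

theorem hook_strongly_normalizing_general (x f : ℕ) (u : Tm) (hu : NSet x f u) :
    ¬ ∃ g : ℕ → Tm, g 0 = u ∧ ∀ n : ℕ, Hook (g n) (g (n + 1)) := by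
  rintro ⟨g, rfl, hg⟩
  have hchain : ∀ n, Chain (g n) := by
    intro n
    induction n with
    | zero => exact hu.chain
    | succ n ih => exact ((hg n).chain_weight_lt ih).1
  obtain ⟨n, hn⟩ := WellFounded.not_rel_apply_succ (r := (· < ·)) (weight ∘ g)
  exact hn ((hg n).chain_weight_lt (hchain n)).2

/-- The reduction ↪ is strongly normalizing on the elements of N_{x,f}
without free μ-variables. -/
theorem hook_strongly_normalizing (x f : ℕ) (u : Tm) (hu : NSet x f u)
    (hfm : u.freeMu = ∅) :
    ¬ ∃ g : ℕ → Tm, g 0 = u ∧ ∀ n : ℕ, Hook (g n) (g (n + 1)) :=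
  hook_strongly_normalizing_general x f u hu

end LambdaMu
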